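/- arXiv:1410.5554 — 2 statements merged into one kernel-verified Lean document; each statement's English description precedes it below -/
import Mathlib

section
/- Let U_e be the equilibrium distribution of a ℤ₊-valued random variable U with finite positive mean, and suppose U_e is long-tailed (lim_{k→∞} P(U_e>k+1)/P(U_e>k) = 1). Then for any h ∈ ℕ, l₀ ∈ ℤ₊ and ν ∈ {0,1,…,h−1}, (1/E[U]) · lim_{k→∞} (Σ_{l=l₀}^{∞} P(U > k + l·h + ν)) / P(U_e > k) = 1/h. -/
open Filter Topology

/-- `P(U > k)` for a ℤ₊-valued random variable with pmf `p`. -/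
noncomputable def tail (p : ℕ → ℝ) (k : ℕ) : ℝ := ∑' l : ℕ, p (k + 1 + l)

/-- Mean of a ℤ₊-valued random variable with pmf `p`. -/
noncomputable def pmean (p : ℕ → ℝ) : ℝ := ∑' k : ℕ, (k : ℝ) * p k

/-!
Splitting `E[U] · P(U_e > n) = ∑_{m > n} P(U > m)` into residue classes mod `h` gives the `h`
strided sums `S (n + 1), …, S (n + h)`, where `S a = ∑_m P(U > a + h m)` is antitone in `a`.
Hence `h · S (n + h) ≤ E[U] · P(U_e > n) ≤ h · S (n + 1)`. Long-tailedness gives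
`P(U_e > k + a) / P(U_e > k + b) → 1` for all fixed shifts `a`, `b`, so both bounds, divided
by `P(U_e > k)`, tend to `E[U] / h`.
-/

lemma summable_tail {p : ℕ → ℝ} (hnn : ∀ k, 0 ≤ p k)
    (hmean : Summable fun k : ℕ => (k : ℝ) * p k) : Summable (tail p) := by
  -- Along the antidiagonal `k + l = n` the summand is constantly `p (n + 1)`, with `n + 1` terms.
  have hF : Summable fun x : ℕ × ℕ => p (x.1 + 1 + x.2) := by
    rw [← Finset.HasAntidiagonal.sigmaAntidiagonalEquivProd.summable_iff]
    refine (summable_sigma_of_nonneg fun _ => hnn _).2 ⟨fun _ => .of_finite, ?_⟩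
    refine ((summable_nat_add_iff 1).2 hmean).congr fun n => ?_
    have hfiber : ∀ y : Finset.HasAntidiagonal.antidiagonal n,
        p (y.1.1 + 1 + y.1.2) = p (n + 1) := fun y => by
      have hy := Finset.HasAntidiagonal.mem_antidiagonal.1 y.2
      congr 1; omega
    simp only [Finset.HasAntidiagonal.sigmaAntidiagonalEquivProd_apply, hfiber, tsum_const,
      Nat.card_eq_fintype_card, Fintype.card_coe, Finset.Nat.card_antidiagonal, nsmul_eq_mul]
  exact hF.prod

lemma tail_eq_add_tail_succ {p : ℕ → ℝ} (hp : Summable p) (k : ℕ) :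
    tail p k = p (k + 1) + tail p (k + 1) := by
  have hshift : Summable fun l => p (k + 1 + l) := hp.comp_injective (add_right_injective _)
  rw [tail, hshift.tsum_eq_zero_add, tail]
  simp only [add_zero]
  exact congrArg _ (tsum_congr fun l => by congr 1; omega)

lemma antitone_tail {p : ℕ → ℝ} (hnn : ∀ k, 0 ≤ p k) (hp : Summable p) :
    Antitone (tail p) :=
  antitone_nat_of_succ_le fun k => by
    rw [tail_eq_add_tail_succ hp k]
    linarith [hnn (k + 1)]

lemma tail_div_const (p : ℕ → ℝ) (c : ℝ) (k : ℕ) :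
    tail (fun k => p k / c) k = tail p k / c :=
  tsum_div_const

section Strided

variable {f : ℕ → ℝ} {h : ℕ}

lemma summable_comp_add_mul (hf : Summable f) (hh : 0 < h) (a : ℕ) :
    Summable fun m => f (a + h * m) :=
  hf.comp_injective fun _ _ hxy => Nat.eq_of_mul_eq_mul_left hh (Nat.add_left_cancel hxy)

lemma antitone_tsum_comp_add_mul (hf : Antitone f) (hs : Summable f) (hh : 0 < h) :
    Antitone fun a => ∑' m, f (a + h * m) := fun a b hab =>
  (summable_comp_add_mul hs hh b).tsum_le_tsum (fun _ => hf (by omega))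
    (summable_comp_add_mul hs hh a)

lemma tail_eq_sum_tsum_comp_add_mul (hs : Summable f) (h : ℕ) [NeZero h] (n : ℕ) :
    tail f n = ∑ j : ZMod h, ∑' m, f (n + 1 + j.val + h * m) := by
  have hshift : Summable fun l => f (n + 1 + l) := hs.comp_injective (add_right_injective _)
  rw [tail, Nat.sumByResidueClasses hshift h]
  simp only [add_assoc]

lemma tail_le_mul_tsum_comp_add_mul (hf : Antitone f) (hs : Summable f) (hh : 0 < h) (n : ℕ) :
    tail f n ≤ h * ∑' m, f (n + 1 + h * m) := by
  have : NeZero h := ⟨hh.ne'⟩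
  rw [tail_eq_sum_tsum_comp_add_mul hs h n]
  calc ∑ j : ZMod h, ∑' m, f (n + 1 + j.val + h * m)
      ≤ ∑ _j : ZMod h, ∑' m, f (n + 1 + h * m) :=
        Finset.sum_le_sum fun j _ => antitone_tsum_comp_add_mul hf hs hh (by omega)
    _ = h * ∑' m, f (n + 1 + h * m) := by simp

lemma mul_tsum_comp_add_mul_le_tail (hf : Antitone f) (hs : Summable f) (hh : 0 < h) (n : ℕ) :
    h * ∑' m, f (n + h + h * m) ≤ tail f n := by
  have : NeZero h := ⟨hh.ne'⟩
  rw [tail_eq_sum_tsum_comp_add_mul hs h n]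
  calc h * ∑' m, f (n + h + h * m) = ∑ _j : ZMod h, ∑' m, f (n + h + h * m) := by simp
    _ ≤ ∑ j : ZMod h, ∑' m, f (n + 1 + j.val + h * m) :=
        Finset.sum_le_sum fun j _ => antitone_tsum_comp_add_mul hf hs hh
          (by have := ZMod.val_lt j; omega)

end Strided

section Ratio

variable {𝕜 : Type*} [NormedField 𝕜] {g : ℕ → 𝕜}

lemma tendsto_add_div_of_tendsto_succ_div (hg : ∀ k, g k ≠ 0)
    (h1 : Tendsto (fun k => g (k + 1) / g k) atTop (𝓝 1)) (a : ℕ) :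
    Tendsto (fun k => g (k + a) / g k) atTop (𝓝 1) := by
  induction a with
  | zero => exact tendsto_const_nhds.congr fun k => (div_self (hg k)).symm
  | succ a ih =>
    simpa [add_assoc] using ((h1.comp (tendsto_add_atTop_nat a)).mul ih).congr fun k =>
      div_mul_div_cancel₀ (hg (k + a))

lemma tendsto_add_div_add_of_tendsto_succ_div (hg : ∀ k, g k ≠ 0)
    (h1 : Tendsto (fun k => g (k + 1) / g k) atTop (𝓝 1)) (a b : ℕ) :
    Tendsto (fun k => g (k + a) / g (k + b)) atTop (𝓝 1) := by
  simpa using ((tendsto_add_div_of_tendsto_succ_div hg h1 a).div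
    (tendsto_add_div_of_tendsto_succ_div hg h1 b) one_ne_zero).congr fun k =>
      div_div_div_cancel_right₀ (hg k) _ _

end Ratio

theorem stmt3_general (p : ℕ → ℝ) (hnn : ∀ k, 0 ≤ p k) (hsum : HasSum p 1)
    (hmean : Summable fun k : ℕ => (k : ℝ) * p k) (hmeanpos : 0 < pmean p)
    (htail : ∀ k, 0 < tail (fun k => tail p k / pmean p) k)
    (hlt : Tendsto
      (fun k => tail (fun k => tail p k / pmean p) (k + 1) /
        tail (fun k => tail p k / pmean p) k) atTop (nhds 1))
    (h : ℕ) (hh : 0 < h) (l₀ : ℕ) (ν : ℕ) :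
    Tendsto
      (fun k => (∑' l : ℕ, tail p (k + (l₀ + l) * h + ν)) /
        tail (fun k => tail p k / pmean p) k)
      atTop (nhds (pmean p / (h : ℝ))) := by
  set μ := pmean p
  simp only [tail_div_const] at htail hlt ⊢
  set G := tail (tail p)
  have hG : ∀ k, 0 < G k := fun k => (div_pos_iff_of_pos_right hmeanpos).1 (htail k)
  have hratio : ∀ a b : ℕ, Tendsto (fun k => G (k + a) / G (k + b)) atTop (𝓝 1) :=
    tendsto_add_div_add_of_tendsto_succ_div (fun k => (hG k).ne')
      (hlt.congr fun k => div_div_div_cancel_right₀ hmeanpos.ne' _ _)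
  have hT_anti := antitone_tail hnn hsum.summable
  have hT_summ := summable_tail hnn hmean
  set c := l₀ * h + ν
  have hS : ∀ k,
      ∑' l : ℕ, tail p (k + (l₀ + l) * h + ν) = ∑' m, tail p (k + c + h * m) :=
    fun k => tsum_congr fun l => by congr 1; rw [Nat.add_mul]; ring
  simp only [hS]
  rw [← tendsto_add_atTop_iff_nat h]
  refine tendsto_of_tendsto_of_tendsto_of_le_of_le
    (by simpa using (hratio (c + (h - 1)) h).const_mul (μ / h))
    (by simpa using (hratio c h).const_mul (μ / h)) (fun k => ?_) (fun k => ?_)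
  · have hlow := tail_le_mul_tsum_comp_add_mul hT_anti hT_summ hh (k + (c + (h - 1)))
    rw [show k + (c + (h - 1)) + 1 = k + h + c by omega] at hlow
    field_simp
    exact div_le_div_of_nonneg_right hlow (hG _).le
  · have hup := mul_tsum_comp_add_mul_le_tail hT_anti hT_summ hh (k + c)
    rw [show k + c + h = k + h + c by omega] at hup
    field_simp
    rw [mul_comm]
    exact div_le_div_of_nonneg_right hup (hG _).le

/-- If the equilibrium distribution `U_e` (with pmf `k ↦ P(U>k)/E[U]`) is long-tailed,
then for every `h ≥ 1`, `l₀ ∈ ℤ₊` and `ν ∈ {0,…,h-1}`,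
`(1/E[U]) · lim_k (Σ_{l ≥ l₀} P(U > k + lh + ν)) / P(U_e > k) = 1/h`, i.e. the limit
equals `E[U]/h`. -/
theorem stmt3 (p : ℕ → ℝ) (hnn : ∀ k, 0 ≤ p k) (hsum : HasSum p 1)
    (hmean : Summable fun k : ℕ => (k : ℝ) * p k) (hmeanpos : 0 < pmean p)
    (htail : ∀ k, 0 < tail (fun k => tail p k / pmean p) k)
    (hlt : Tendsto
      (fun k => tail (fun k => tail p k / pmean p) (k + 1) /
        tail (fun k => tail p k / pmean p) k) atTop (nhds 1))
    (h : ℕ) (hh : 0 < h) (l₀ : ℕ) (ν : ℕ) (hν : ν < h) :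
    Tendsto
      (fun k => (∑' l : ℕ, tail p (k + (l₀ + l) * h + ν)) /
        tail (fun k => tail p k / pmean p) k)
      atTop (nhds (pmean p / (h : ℝ))) :=
  stmt3_general p hnn hsum hmean hmeanpos htail hlt h hh l₀ ν
end

section
/- Let U be a ℤ₊-valued random variable in S_loc(1), and let U^{(1)}, …, U^{(n)} be independent ℤ₊-valued random variables with lim_{k→∞} P(U^{(j)} = k)/P(U = k) = c_j ∈ [0,∞) for each j. Then lim_{k→∞} P(U^{(1)} + ⋯ + U^{(n)} = k)/P(U = k) = c₁ + ⋯ + c_n. -/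
/-!
Fix a cut-off `m` and split `P(U⁽¹⁾ + U⁽²⁾ = k)` into the terms where `U⁽²⁾ < m`, where
`U⁽¹⁾ < m`, and the middle terms where both are at least `m`. Since `P(U = k - l) / P(U = k) → 1`
for each fixed `l`, the first two parts divided by `P(U = k)` tend to `c₁ P(U⁽²⁾ < m)` and
`c₂ P(U⁽¹⁾ < m)`. The middle part is at most a constant times the corresponding middle part of
`P(U₁ + U₂ = k)`, which divided by `P(U = k)` tends to `2 - 2 P(U < m)` by subexponentiality;
this vanishes as `m → ∞`. The case of `n` summands follows by induction.
-/

open Filter Topology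

/-- Discrete convolution of two pmfs on ℤ₊. -/
noncomputable def conv (f g : ℕ → ℝ) (k : ℕ) : ℝ :=
  ∑ l ∈ Finset.range (k + 1), f (k - l) * g l

/-- Point mass at 0 (unit for convolution). -/
noncomputable def delta0 : ℕ → ℝ := fun k => if k = 0 then 1 else 0

/-- Convolution of a list of pmfs; this is the pmf of the sum of independent random
variables with those pmfs. -/
noncomputable def convList : List (ℕ → ℝ) → ℕ → ℝ
  | [] => delta0
  | f :: fs => conv f (convList fs)

/-- `U ∈ S_loc(1)`: locally subexponential with span one. -/
def SLocOne (q : ℕ → ℝ) : Prop :=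
  (∀ᶠ k in atTop, 0 < q k) ∧
    Tendsto (fun k => q (k + 1) / q k) atTop (nhds 1) ∧
    Tendsto (fun k => conv q q k / q k) atTop (nhds 2)

open Finset

lemma tendsto_of_squeeze_family {ι κ α : Type*} [LinearOrder α] [TopologicalSpace α]
    [OrderTopology α] {l : Filter ι} {l' : Filter κ} [NeBot l'] {u : ι → α}
    {lo hi : κ → ι → α} {Llo Lhi : κ → α} {L : α}
    (hlo : ∀ m, Tendsto (lo m) l (𝓝 (Llo m))) (hhi : ∀ m, Tendsto (hi m) l (𝓝 (Lhi m)))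
    (hLlo : Tendsto Llo l' (𝓝 L)) (hLhi : Tendsto Lhi l' (𝓝 L))
    (hle : ∀ᶠ m in l', ∀ᶠ k in l, lo m k ≤ u k ∧ u k ≤ hi m k) :
    Tendsto u l (𝓝 L) := by
  rw [tendsto_order]
  constructor
  · intro b hb
    obtain ⟨m, hm, hbm⟩ := (hle.and ((tendsto_order.1 hLlo).1 b hb)).exists
    filter_upwards [(tendsto_order.1 (hlo m)).1 b hbm, hm] with k hlt hk
    exact hlt.trans_le hk.1
  · intro b hb
    obtain ⟨m, hm, hbm⟩ := (hle.and ((tendsto_order.1 hLhi).2 b hb)).exists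
    filter_upwards [(tendsto_order.1 (hhi m)).2 b hbm, hm] with k hlt hk
    exact hk.2.trans_lt hlt

lemma eventually_le_mul_of_tendsto_div {ι : Type*} {l : Filter ι} {f p : ι → ℝ} {a C : ℝ}
    (hpos : ∀ᶠ k in l, 0 < p k) (hfa : Tendsto (fun k => f k / p k) l (𝓝 a)) (haC : a < C) :
    ∀ᶠ k in l, f k ≤ C * p k := by
  filter_upwards [hfa.eventually_lt_const haC, hpos] with k hlt hk
  exact ((div_lt_iff₀ hk).1 hlt).le

lemma hasSum_conv {f g : ℕ → ℝ} {α β : ℝ} (hf0 : ∀ k, 0 ≤ f k) (hg0 : ∀ k, 0 ≤ g k)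
    (hf : HasSum f α) (hg : HasSum g β) : HasSum (conv f g) (α * β) := by
  have hfn : Summable fun k => ‖f k‖ :=
    hf.summable.congr fun k => (Real.norm_of_nonneg (hf0 k)).symm
  have hgn : Summable fun k => ‖g k‖ :=
    hg.summable.congr fun k => (Real.norm_of_nonneg (hg0 k)).symm
  have h := hasSum_sum_range_mul_of_summable_norm hgn hfn
  rw [hf.tsum_eq, hg.tsum_eq, mul_comm β] at h
  exact h.congr_fun fun n => sum_congr rfl fun l _ => mul_comm _ _

lemma convList_nonneg {L : List (ℕ → ℝ)} (h : ∀ f ∈ L, ∀ k, 0 ≤ f k) (k : ℕ) :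
    0 ≤ convList L k := by
  induction L generalizing k with
  | nil => unfold convList delta0; positivity
  | cons f L ih =>
    rw [convList, conv]
    exact sum_nonneg fun l _ => mul_nonneg (h f (by simp) _)
      (ih (fun g hg => h g (List.mem_cons_of_mem f hg)) l)

lemma hasSum_convList {L : List (ℕ → ℝ)} (h0 : ∀ f ∈ L, ∀ k, 0 ≤ f k)
    (h1 : ∀ f ∈ L, HasSum f 1) : HasSum (convList L) 1 := by
  induction L with
  | nil => exact hasSum_ite_eq 0 1
  | cons f L ih =>
    have hL0 : ∀ g ∈ L, ∀ k, 0 ≤ g k := fun g hg => h0 g (List.mem_cons_of_mem f hg)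
    rw [convList, ← mul_one 1]
    exact hasSum_conv (h0 f (by simp)) (convList_nonneg hL0)
      (h1 f (by simp)) (ih hL0 fun g hg => h1 g (List.mem_cons_of_mem f hg))

section Shift

variable {p f : ℕ → ℝ}

lemma tendsto_add_nat_div (hpos : ∀ᶠ k in atTop, 0 < p k)
    (hr : Tendsto (fun k => p (k + 1) / p k) atTop (𝓝 1)) (l : ℕ) :
    Tendsto (fun k => p (k + l) / p k) atTop (𝓝 1) := by
  induction l with
  | zero =>
    refine tendsto_const_nhds.congr' ?_
    filter_upwards [hpos] with k hk
    simp [hk.ne']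
  | succ l ih =>
    have h := (hr.comp (tendsto_add_atTop_nat l)).mul ih
    rw [one_mul] at h
    refine h.congr' ?_
    filter_upwards [(tendsto_add_atTop_nat l).eventually hpos] with k hk
    simp only [Function.comp, ← add_assoc]
    field_simp

lemma tendsto_sub_nat_div (hpos : ∀ᶠ k in atTop, 0 < p k)
    (hr : Tendsto (fun k => p (k + 1) / p k) atTop (𝓝 1)) {a : ℝ}
    (hfa : Tendsto (fun k => f k / p k) atTop (𝓝 a)) (l : ℕ) :
    Tendsto (fun k => f (k - l) / p k) atTop (𝓝 a) := by
  have h := (hfa.div (tendsto_add_nat_div hpos hr l) one_ne_zero).comp (tendsto_sub_atTop_nat l)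
  rw [div_one] at h
  refine h.congr' ?_
  filter_upwards [eventually_ge_atTop l, (tendsto_sub_atTop_nat l).eventually hpos]
    with k hlk hk
  simp only [Function.comp, Pi.div_apply, Nat.sub_add_cancel hlk]
  field_simp

end Shift

noncomputable def convHead (f g : ℕ → ℝ) (m k : ℕ) : ℝ :=
  ∑ l ∈ range m, f (k - l) * g l

/-- The terms of `conv f g k` in which both arguments are at least `m`. -/
noncomputable def convMiddle (f g : ℕ → ℝ) (m k : ℕ) : ℝ :=
  ∑ l ∈ Ico m (k + 1 - m), f (k - l) * g l

lemma conv_eq_convHead_add_convMiddle_add_convHead (f g : ℕ → ℝ) {m k : ℕ} (hk : 2 * m ≤ k) :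
    conv f g k = convHead f g m k + convMiddle f g m k + convHead g f m k := by
  have hm : m ≤ k + 1 - m := by omega
  have htail : ∑ l ∈ Ico (k + 1 - m) (k + 1), f (k - l) * g l = convHead g f m k := by
    have hreflect := sum_Ico_reflect (fun j => f (k - j) * g j) 0 (by omega : m ≤ k + 1)
    rw [Nat.sub_zero] at hreflect
    rw [convHead, range_eq_Ico, ← hreflect]
    refine sum_congr rfl fun l hl => ?_
    rw [Nat.sub_sub_self (by simp at hl; omega), mul_comm]
  rw [conv, range_eq_Ico, ← sum_Ico_consecutive _ (Nat.zero_le m) (hm.trans (by omega)),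
    ← sum_Ico_consecutive _ hm (by omega), htail]
  simp only [convHead, convMiddle, range_eq_Ico, add_assoc]

lemma convMiddle_nonneg {f g : ℕ → ℝ} (hf0 : ∀ k, 0 ≤ f k) (hg0 : ∀ k, 0 ≤ g k) (m k : ℕ) :
    0 ≤ convMiddle f g m k :=
  sum_nonneg fun _ _ => mul_nonneg (hf0 _) (hg0 _)

lemma convMiddle_le {f g p : ℕ → ℝ} {C : ℝ} {N m : ℕ} (hf0 : ∀ k, 0 ≤ f k)
    (hg0 : ∀ k, 0 ≤ g k) (hf : ∀ k ≥ N, f k ≤ C * p k) (hg : ∀ k ≥ N, g k ≤ C * p k)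
    (hm : N ≤ m) (k : ℕ) :
    convMiddle f g m k ≤ C ^ 2 * convMiddle p p m k := by
  rw [convMiddle, convMiddle, mul_sum]
  refine sum_le_sum fun l hl => ?_
  rw [mem_Ico] at hl
  have hkl : N ≤ k - l := by omega
  calc f (k - l) * g l ≤ (C * p (k - l)) * (C * p l) :=
        mul_le_mul (hf _ hkl) (hg l (by omega)) (hg0 l) ((hf0 _).trans (hf _ hkl))
    _ = C ^ 2 * (p (k - l) * p l) := by ring

lemma tendsto_convHead_div {p f : ℕ → ℝ} (hpos : ∀ᶠ k in atTop, 0 < p k)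
    (hr : Tendsto (fun k => p (k + 1) / p k) atTop (𝓝 1)) {a : ℝ}
    (hfa : Tendsto (fun k => f k / p k) atTop (𝓝 a)) (g : ℕ → ℝ) (m : ℕ) :
    Tendsto (fun k => convHead f g m k / p k) atTop (𝓝 (a * ∑ l ∈ range m, g l)) := by
  simp only [convHead, sum_div, mul_sum]
  refine tendsto_finsetSum _ fun l _ => ?_
  simpa only [div_mul_eq_mul_div] using (tendsto_sub_nat_div hpos hr hfa l).mul_const (g l)

lemma tendsto_convMiddle_self_div {p : ℕ → ℝ} (hS : SLocOne p) (m : ℕ) :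
    Tendsto (fun k => convMiddle p p m k / p k) atTop (𝓝 (2 - 2 * ∑ l ∈ range m, p l)) := by
  obtain ⟨hpos, hr, hconv⟩ := hS
  have hone : Tendsto (fun k => p k / p k) atTop (𝓝 1) := by
    refine tendsto_const_nhds.congr' ?_
    filter_upwards [hpos] with k hk
    simp [hk.ne']
  have hhead := tendsto_convHead_div hpos hr hone p m
  have h := (hconv.sub hhead).sub hhead
  rw [show (2 : ℝ) - 1 * ∑ l ∈ range m, p l - 1 * ∑ l ∈ range m, p l
      = 2 - 2 * ∑ l ∈ range m, p l by ring] at h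
  refine h.congr' ?_
  filter_upwards [eventually_ge_atTop (2 * m)] with k hk
  rw [conv_eq_convHead_add_convMiddle_add_convHead p p hk]
  ring

theorem tendsto_conv_div {p f g : ℕ → ℝ} (hp : HasSum p 1) (hS : SLocOne p)
    (hf0 : ∀ k, 0 ≤ f k) (hg0 : ∀ k, 0 ≤ g k) {α β a b : ℝ} (hf : HasSum f α)
    (hg : HasSum g β) (hfa : Tendsto (fun k => f k / p k) atTop (𝓝 a))
    (hgb : Tendsto (fun k => g k / p k) atTop (𝓝 b)) :
    Tendsto (fun k => conv f g k / p k) atTop (𝓝 (a * β + b * α)) := by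
  have hpos := hS.1
  have hr := hS.2.1
  obtain ⟨C, haC, hbC⟩ : ∃ C, a < C ∧ b < C :=
    ⟨max a b + 1, by linarith [le_max_left a b], by linarith [le_max_right a b]⟩
  obtain ⟨N, hN⟩ := eventually_atTop.1 ((eventually_le_mul_of_tendsto_div hpos hfa haC).and
    (eventually_le_mul_of_tendsto_div hpos hgb hbC))
  have hheads (m : ℕ) := (tendsto_convHead_div hpos hr hfa g m).add
    (tendsto_convHead_div hpos hr hgb f m)
  have hmiddle (m : ℕ) := (tendsto_convMiddle_self_div hS m).const_mul (C ^ 2)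
  have hlimits := (hg.tendsto_sum_nat.const_mul a).add (hf.tendsto_sum_nat.const_mul b)
  have hvanish : Tendsto (fun m => C ^ 2 * (2 - 2 * ∑ l ∈ range m, p l)) atTop (𝓝 0) := by
    simpa using ((hp.tendsto_sum_nat.const_mul 2).const_sub 2).const_mul (C ^ 2)
  refine tendsto_of_squeeze_family hheads (fun m => (hheads m).add (hmiddle m)) hlimits
    (by simpa using hlimits.add hvanish) ?_
  filter_upwards [eventually_ge_atTop N] with m hm
  filter_upwards [eventually_ge_atTop (2 * m), hpos] with k hk hpk
  have hmid := div_le_div_of_nonneg_right (convMiddle_le hf0 hg0 (fun j hj => (hN j hj).1)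
    (fun j hj => (hN j hj).2) hm k) hpk.le
  have hmid0 := div_nonneg (convMiddle_nonneg hf0 hg0 m k) hpk.le
  rw [conv_eq_convHead_add_convMiddle_add_convHead f g hk, add_div, add_div]
  rw [mul_div_assoc] at hmid
  constructor <;> linarith

theorem stmt18_general (n : ℕ) (p : ℕ → ℝ) (hsum : HasSum p 1)
    (hS : SLocOne p)
    (q : Fin n → ℕ → ℝ) (hqnn : ∀ j k, 0 ≤ q j k) (hqsum : ∀ j, HasSum (q j) 1)
    (c : Fin n → ℝ)
    (hlim : ∀ j, Tendsto (fun k => q j k / p k) atTop (nhds (c j))) :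
    Tendsto (fun k => convList (List.ofFn q) k / p k) atTop (nhds (∑ j, c j)) := by
  induction n with
  | zero =>
    refine tendsto_const_nhds.congr' ?_
    filter_upwards [eventually_ne_atTop 0] with k hk
    simp [convList, delta0, hk]
  | succ n ih =>
    have htail0 : ∀ f ∈ List.ofFn fun j => q j.succ, ∀ k, 0 ≤ f k :=
      List.forall_mem_ofFn_iff.2 fun j => hqnn j.succ
    have hconv := tendsto_conv_div hsum hS (hqnn 0) (convList_nonneg htail0) (hqsum 0)
      (hasSum_convList htail0 (List.forall_mem_ofFn_iff.2 fun j => hqsum j.succ)) (hlim 0)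
      (ih (fun j => q j.succ) (fun j => hqnn j.succ) (fun j => hqsum j.succ) (fun j => c j.succ)
        fun j => hlim j.succ)
    rw [List.ofFn_succ, convList, Fin.sum_univ_succ]
    simpa using hconv

/-- Span-1 case of Proposition 3 of Asmussen–Foss–Korshunov: if `U ∈ S_loc(1)` and
independent `U^{(j)}` satisfy `P(U^{(j)}=k)/P(U=k) → c_j`, then
`P(U^{(1)}+⋯+U^{(n)}=k)/P(U=k) → c₁+⋯+c_n`. -/
theorem stmt18 (n : ℕ) (p : ℕ → ℝ) (hnn : ∀ k, 0 ≤ p k) (hsum : HasSum p 1)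
    (hS : SLocOne p)
    (q : Fin n → ℕ → ℝ) (hqnn : ∀ j k, 0 ≤ q j k) (hqsum : ∀ j, HasSum (q j) 1)
    (c : Fin n → ℝ) (hc : ∀ j, 0 ≤ c j)
    (hlim : ∀ j, Tendsto (fun k => q j k / p k) atTop (nhds (c j))) :
    Tendsto (fun k => convList (List.ofFn q) k / p k) atTop (nhds (∑ j, c j)) :=
  stmt18_general n p hsum hS q hqnn hqsum c hlim
end
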